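/- Let N = n², m ≥ 1, q = N/(N+m−1), and let Z be the number of edges of the support of a uniformly random bipartite multigraph from B'(n,m). Then for every λ > 0, Pr[|Z − mq| > λ] ≤ mq/λ². -/

import Mathlib

open scoped Classical

/-- The finite set `B'(n,m)` of all bipartite multigraphs on the vertex set of the
complete bipartite graph `K_{n,n}` with total edge multiplicity `m`: a multigraph is
a multiplicity function on the `n²` possible edges, which we encode as the pairs
`(i,j)` (the edge joining left-vertex `i` to right-vertex `j`). -/
def multigraphs (n m : ℕ) : Finset (Fin n × Fin n → ℕ) :=
  (Fintype.piFinset fun _ : Fin n × Fin n => Finset.range (m + 1)).filter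
    fun f => ∑ e, f e = m

/-- The number of edges of the support of a multigraph, i.e. the number of edges
with positive multiplicity. -/
def suppSize {n : ℕ} (f : Fin n × Fin n → ℕ) : ℕ :=
  (Finset.univ.filter fun e => 0 < f e).card

/-!
Write `Z = N - W`, where `W` counts the edges of multiplicity zero. By stars and bars, the
multigraphs vanishing on a given set of `k` edges number `multichoose (N - k) m`. So each edge is
missing with the same probability `p = multichoose (N - 1) m / multichoose N m`, whence
`E Z = N (1 - p) = m q`, and two distinct edges are both missing with probability at most `p²`
by log-concavity of `k ↦ multichoose k m`. The covariances being nonpositive,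
`Var Z = Var W ≤ N p (1 - p) ≤ E Z`, and Chebyshev's inequality concludes.
-/

open Finset

namespace Nat

theorem multichoose_succ_mul (n m : ℕ) :
    (n + 1).multichoose m * n = n.multichoose m * (n + m) := by
  rcases m with _ | k
  · simp
  rcases n with _ | j
  · simp
  rw [multichoose_eq, multichoose_eq, show j + 1 + 1 + (k + 1) - 1 = j + k + 1 + 1 by omega,
    show j + 1 + (k + 1) - 1 = j + k + 1 by omega, show j + 1 + (k + 1) = j + k + 1 + 1 by omega,
    choose_mul_succ_eq, show j + k + 1 + 1 - (k + 1) = j + 1 by omega]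

theorem multichoose_mul_multichoose_add_two_le_sq (n m : ℕ) :
    n.multichoose m * (n + 2).multichoose m ≤ (n + 1).multichoose m ^ 2 := by
  rcases Nat.eq_zero_or_pos m with rfl | hm
  · simp
  have h₁ := multichoose_succ_mul n m
  have h₂ := multichoose_succ_mul (n + 1) m
  refine Nat.le_of_mul_le_mul_right ?_ (Nat.mul_pos (by omega : 0 < n + m) n.succ_pos)
  calc n.multichoose m * (n + 2).multichoose m * ((n + m) * (n + 1))
      = (n.multichoose m * (n + m)) * ((n + 1 + 1).multichoose m * (n + 1)) := by ring
    _ = (n + 1).multichoose m ^ 2 * (n * (n + 1 + m)) := by rw [← h₁, h₂]; ring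
    _ ≤ (n + 1).multichoose m ^ 2 * ((n + m) * (n + 1)) := by
      exact Nat.mul_le_mul_left _ (by nlinarith)

end Nat

namespace Finset

variable {ι α : Type*}

theorem card_piAntidiag_nat [DecidableEq ι] (s : Finset ι) (m : ℕ) :
    #(piAntidiag s m) = (#s).multichoose m := by
  have := card_finsuppAntidiag_nat_eq_multichoose (s := s) m
  rwa [finsuppAntidiag, card_map, card_attach] at this

theorem filter_piAntidiag_forall_eq_zero [DecidableEq ι] (s t : Finset ι) (m : ℕ) :
    {f ∈ piAntidiag s m | ∀ i ∈ t, f i = 0} = piAntidiag (s \ t) m := by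
  ext f
  simp only [mem_filter, mem_piAntidiag, mem_sdiff]
  constructor
  · rintro ⟨⟨hsum, hsupp⟩, hzero⟩
    refine ⟨?_, fun i hi => ⟨hsupp i hi, fun hit => hi (hzero i hit)⟩⟩
    rw [← hsum]
    exact sum_subset sdiff_subset fun i _ hi => hzero i (by simp_all)
  · rintro ⟨hsum, hsupp⟩
    refine ⟨⟨?_, fun i hi => (hsupp i hi).1⟩, fun i hit => by_contra fun hi => (hsupp i hi).2 hit⟩
    rw [← hsum]
    exact (sum_subset sdiff_subset fun i _ hi =>
      by_contra fun h => hi (mem_sdiff.2 (hsupp i h))).symm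

theorem sq_mul_card_filter_lt_abs_sub_le (S : Finset α) (g : α → ℝ) (c : ℝ) {lam : ℝ}
    (hlam : 0 ≤ lam) :
    lam ^ 2 * #{x ∈ S | lam < |g x - c|} ≤ ∑ x ∈ S, (g x - c) ^ 2 := by
  calc lam ^ 2 * #{x ∈ S | lam < |g x - c|}
      = ∑ x ∈ S with lam < |g x - c|, lam ^ 2 := by rw [sum_const, nsmul_eq_mul, mul_comm]
    _ ≤ ∑ x ∈ S with lam < |g x - c|, (g x - c) ^ 2 := by
      refine sum_le_sum fun x hx => ?_
      rw [← sq_abs (g x - c)]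
      exact pow_le_pow_left₀ hlam (mem_filter.1 hx).2.le 2
    _ ≤ ∑ x ∈ S, (g x - c) ^ 2 :=
      sum_le_sum_of_subset_of_nonneg (filter_subset _ _) fun _ _ _ => sq_nonneg _

variable (S : Finset α) (E : Finset ι) (P : ι → α → Prop) [∀ e x, Decidable (P e x)]

theorem sum_card_filter_sq :
    ∑ x ∈ S, #{e ∈ E | P e x} ^ 2 = ∑ e ∈ E, ∑ e' ∈ E, #{x ∈ S | P e x ∧ P e' x} := by
  let r : α → ι × ι → Prop := fun x p => P p.1 x ∧ P p.2 x
  calc ∑ x ∈ S, #{e ∈ E | P e x} ^ 2 = ∑ x ∈ S, #((E ×ˢ E).bipartiteAbove r x) :=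
        sum_congr rfl fun x _ => by rw [sq, ← card_product, bipartiteAbove, ← filter_product]
    _ = ∑ p ∈ E ×ˢ E, #(S.bipartiteBelow r p) :=
        sum_card_bipartiteAbove_eq_sum_card_bipartiteBelow r
    _ = ∑ e ∈ E, ∑ e' ∈ E, #{x ∈ S | P e x ∧ P e' x} := sum_product _ _ _

theorem card_mul_sum_card_filter_sq_le {b : ℕ}
    (hone : ∀ e ∈ E, #{x ∈ S | P e x} = b)
    (hneg : ∀ e ∈ E, ∀ e' ∈ E, e ≠ e' → #S * #{x ∈ S | P e x ∧ P e' x} ≤ b ^ 2) :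
    #S * ∑ x ∈ S, #{e ∈ E | P e x} ^ 2 + #E * b ^ 2 ≤ #E * (#S * b + #E * b ^ 2) := by
  have hrow : ∀ e ∈ E,
      #S * ∑ e' ∈ E, #{x ∈ S | P e x ∧ P e' x} + b ^ 2 ≤ #S * b + #E * b ^ 2 := by
    intro e he
    have hdiag : #{x ∈ S | P e x ∧ P e x} = b := by simp only [and_self, hone e he]
    have hoff : ∑ e' ∈ E.erase e, #S * #{x ∈ S | P e x ∧ P e' x} ≤ #(E.erase e) * b ^ 2 := by
      rw [← smul_eq_mul, ← sum_const]
      exact sum_le_sum fun e' he' =>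
        hneg e he e' (mem_of_mem_erase he') (ne_of_mem_erase he').symm
    rw [← add_sum_erase E _ he, hdiag, mul_add, mul_sum, ← card_erase_add_one he]
    nlinarith
  calc #S * ∑ x ∈ S, #{e ∈ E | P e x} ^ 2 + #E * b ^ 2
      = ∑ e ∈ E, (#S * ∑ e' ∈ E, #{x ∈ S | P e x ∧ P e' x} + b ^ 2) := by
        rw [sum_card_filter_sq, mul_sum, sum_add_distrib, sum_const, smul_eq_mul]
    _ ≤ ∑ _e ∈ E, (#S * b + #E * b ^ 2) := sum_le_sum hrow
    _ = #E * (#S * b + #E * b ^ 2) := by rw [sum_const, smul_eq_mul]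

theorem sum_sq_card_filter_sub_le {b : ℕ}
    (hone : ∀ e ∈ E, #{x ∈ S | P e x} = b)
    (hneg : ∀ e ∈ E, ∀ e' ∈ E, e ≠ e' → #S * #{x ∈ S | P e x ∧ P e' x} ≤ b ^ 2) :
    ∑ x ∈ S, ((#{e ∈ E | P e x} : ℝ) - #E * b / #S) ^ 2 ≤ #E * b * (#S - b) / #S := by
  rcases S.eq_empty_or_nonempty with rfl | hS
  · simp
  have hpos : (0 : ℝ) < #S := by exact_mod_cast hS.card_pos
  have hfirst : ∑ x ∈ S, (#{e ∈ E | P e x} : ℝ) = #E * b := by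
    have h : ∑ x ∈ S, #{e ∈ E | P e x} = ∑ e ∈ E, #{x ∈ S | P e x} :=
      sum_card_bipartiteAbove_eq_sum_card_bipartiteBelow _
    rw [sum_congr rfl hone, sum_const, smul_eq_mul] at h
    exact_mod_cast h
  have hsecond : (#S : ℝ) * ∑ x ∈ S, (#{e ∈ E | P e x} : ℝ) ^ 2 + #E * b ^ 2
      ≤ #E * (#S * b + #E * b ^ 2) := by
    exact_mod_cast card_mul_sum_card_filter_sq_le S E P hone hneg
  have hexpand : ∑ x ∈ S, ((#{e ∈ E | P e x} : ℝ) - #E * b / #S) ^ 2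
      = ∑ x ∈ S, (#{e ∈ E | P e x} : ℝ) ^ 2 - 2 * (#E * b / #S) * ∑ x ∈ S, (#{e ∈ E | P e x} : ℝ)
        + #S * (#E * b / #S) ^ 2 := by
    simp only [sub_sq, sum_add_distrib, sum_sub_distrib, mul_sum, sum_const, nsmul_eq_mul]
    congr 2
    exact sum_congr rfl fun _ _ => by ring
  rw [le_div_iff₀ hpos, hexpand, hfirst]
  field_simp
  nlinarith [hsecond]

theorem card_filter_lt_abs_sub_div_le {b : ℕ}
    (hone : ∀ e ∈ E, #{x ∈ S | P e x} = b)
    (hneg : ∀ e ∈ E, ∀ e' ∈ E, e ≠ e' → #S * #{x ∈ S | P e x ∧ P e' x} ≤ b ^ 2)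
    {lam : ℝ} (hlam : 0 < lam) :
    (#{x ∈ S | lam < |(#{e ∈ E | P e x} : ℝ) - #E * b / #S|} : ℝ) / #S
      ≤ (#E - #E * b / #S) / lam ^ 2 := by
  rcases S.eq_empty_or_nonempty with rfl | hS
  · simp only [card_empty, CharP.cast_eq_zero, div_zero, sub_zero]
    positivity
  have hpos : (0 : ℝ) < #S := by exact_mod_cast hS.card_pos
  rw [div_le_div_iff₀ hpos (by positivity)]
  calc (#{x ∈ S | lam < |(#{e ∈ E | P e x} : ℝ) - #E * b / #S|} : ℝ) * lam ^ 2
      ≤ ∑ x ∈ S, ((#{e ∈ E | P e x} : ℝ) - #E * b / #S) ^ 2 := by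
        rw [mul_comm]
        exact sq_mul_card_filter_lt_abs_sub_le S _ _ hlam.le
    _ ≤ #E * b * (#S - b) / #S := sum_sq_card_filter_sub_le S E P hone hneg
    _ ≤ (#E - #E * b / #S) * #S := by
        rw [div_le_iff₀ hpos, sub_mul, div_mul_cancel₀ _ hpos.ne']
        nlinarith [mul_nonneg (Nat.cast_nonneg (α := ℝ) #E) (sq_nonneg ((#S : ℝ) - b))]

end Finset

theorem multigraphs_eq_piAntidiag (n m : ℕ) : multigraphs n m = piAntidiag univ m := by
  ext f
  simp only [multigraphs, mem_filter, Fintype.mem_piFinset, mem_range, Nat.lt_succ_iff,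
    mem_piAntidiag, mem_univ, implies_true, and_true, and_iff_right_iff_imp]
  rintro rfl e
  exact single_le_sum (fun _ _ => Nat.zero_le _) (mem_univ e)

theorem card_multigraphs_filter_forall_eq_zero (n m : ℕ) (t : Finset (Fin n × Fin n)) :
    #{f ∈ multigraphs n m | ∀ e ∈ t, f e = 0} = (n ^ 2 - #t).multichoose m := by
  have hcard : n ^ 2 - #t = #(univ \ t) := by simp [card_univ_sdiff, sq]
  rw [multigraphs_eq_piAntidiag, hcard, ← card_piAntidiag_nat,
    ← filter_piAntidiag_forall_eq_zero]
  -- the two filters differ only in their decidability instances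
  congr

theorem card_multigraphs (n m : ℕ) : #(multigraphs n m) = (n ^ 2).multichoose m := by
  simpa using card_multigraphs_filter_forall_eq_zero n m ∅

theorem card_multigraphs_filter_eq_zero (n m : ℕ) (e : Fin n × Fin n) :
    #{f ∈ multigraphs n m | f e = 0} = (n ^ 2 - 1).multichoose m := by
  simpa using card_multigraphs_filter_forall_eq_zero n m {e}

theorem card_multigraphs_mul_card_filter_eq_zero_and_le (n m : ℕ) {e e' : Fin n × Fin n}
    (hne : e ≠ e') :
    #(multigraphs n m) * #{f ∈ multigraphs n m | f e = 0 ∧ f e' = 0}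
      ≤ (n ^ 2 - 1).multichoose m ^ 2 := by
  have hpair := card_multigraphs_filter_forall_eq_zero n m {e, e'}
  simp only [mem_insert, mem_singleton, forall_eq_or_imp, forall_eq, card_pair hne] at hpair
  obtain ⟨k, hk⟩ : ∃ k, n ^ 2 = k + 2 := ⟨n ^ 2 - 2, by
    have := card_le_univ ({e, e'} : Finset (Fin n × Fin n))
    rw [card_pair hne, Fintype.card_prod, Fintype.card_fin] at this
    rw [sq]; omega⟩
  rw [card_multigraphs, hpair, hk, mul_comm]
  exact Nat.multichoose_mul_multichoose_add_two_le_sq k m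

theorem suppSize_add_card_filter_eq_zero {n : ℕ} (f : Fin n × Fin n → ℕ) :
    suppSize f + #{e | f e = 0} = n ^ 2 := by
  simp only [suppSize, Nat.pos_iff_ne_zero]
  rw [add_comm]
  exact (card_filter_add_card_filter_not _).trans (by simp [sq])

theorem mul_div_add_sub_one_eq_sub_mul_multichoose_div (N m : ℕ) :
    (m : ℝ) * (N / (N + m - 1)) = N - N * (N - 1).multichoose m / N.multichoose m := by
  rcases N with _ | k
  · simp
  rcases Nat.eq_zero_or_pos m with rfl | hm
  · simp
  have hpos : (0 : ℝ) < (k + 1).multichoose m := by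
    rw [Nat.multichoose_eq]
    exact_mod_cast Nat.choose_pos (by omega)
  have hden : (0 : ℝ) < k + m := by positivity
  have hrec : ((k + 1).multichoose m : ℝ) * k = k.multichoose m * (k + m) := by
    exact_mod_cast Nat.multichoose_succ_mul k m
  rw [Nat.add_sub_cancel]
  push_cast
  rw [show (k : ℝ) + 1 + m - 1 = k + m by ring]
  field_simp
  linear_combination -hrec

theorem suppSize_concentration_general (n m : ℕ) (lam : ℝ) (hlam : 0 < lam) :
    (((multigraphs n m).filter fun f =>
        lam < |(suppSize f : ℝ) -
          (m : ℝ) * ((n : ℝ) ^ 2 / ((n : ℝ) ^ 2 + (m : ℝ) - 1))|).card : ℝ) /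
        ((multigraphs n m).card : ℝ) ≤
      (m : ℝ) * ((n : ℝ) ^ 2 / ((n : ℝ) ^ 2 + (m : ℝ) - 1)) / lam ^ 2 := by
  have hbound := card_filter_lt_abs_sub_div_le (multigraphs n m) univ (fun e f => f e = 0)
    (fun e _ => card_multigraphs_filter_eq_zero n m e)
    (fun _ _ _ _ hne => card_multigraphs_mul_card_filter_eq_zero_and_le n m hne) hlam
  have hmean := mul_div_add_sub_one_eq_sub_mul_multichoose_div (n ^ 2) m
  simp only [card_univ, Fintype.card_prod, Fintype.card_fin, ← sq, card_multigraphs] at hbound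
  push_cast at hmean hbound
  rw [hmean, card_multigraphs]
  refine le_of_eq_of_le ?_ hbound
  congr 3
  refine filter_congr fun f _ => ?_
  have hsupp : (suppSize f : ℝ) = n ^ 2 - #{e | f e = 0} := by
    rw [eq_sub_iff_add_eq]
    exact_mod_cast suppSize_add_card_filter_eq_zero f
  rw [hsupp, sub_sub_sub_cancel_left, abs_sub_comm]

/-- Chebyshev-type bound: for the support size `Z` of a uniformly random bipartite
multigraph from `B'(n,m)`, with `N = n²` and `q = N/(N+m−1)`, for every `λ > 0`,
`Pr[|Z − mq| > λ] ≤ mq/λ²`. -/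
theorem suppSize_concentration (n m : ℕ) (hm : 1 ≤ m) (lam : ℝ) (hlam : 0 < lam) :
    (((multigraphs n m).filter fun f =>
        lam < |(suppSize f : ℝ) -
          (m : ℝ) * ((n : ℝ) ^ 2 / ((n : ℝ) ^ 2 + (m : ℝ) - 1))|).card : ℝ) /
        ((multigraphs n m).card : ℝ) ≤
      (m : ℝ) * ((n : ℝ) ^ 2 / ((n : ℝ) ^ 2 + (m : ℝ) - 1)) / lam ^ 2 :=
  suppSize_concentration_general n m lam hlam
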